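/- For every integer n ≥ 1, the polynomial identity Σ_{i=1}^{n} Cat(A_{i−1}; q)·Cat(B_{n−i}; q) = n·Cat(A_{n−1}; q) holds in ℚ[q]. -/

import Mathlib

open Polynomial

/-- The type-A Catalan polynomial `Cat(Aₙ; q) = Σₖ Narₖ(Aₙ) qᵏ`, where
`Narₖ(Aₙ) = (1/(n+1))·C(n+1, k)·C(n+1, k+1)` are the type-A Narayana numbers. -/
noncomputable def catA (n : ℕ) : Polynomial ℚ :=
  ∑ k ∈ Finset.range (n + 1),
    C ((1 / ((n : ℚ) + 1)) * ((n + 1).choose k : ℚ) * ((n + 1).choose (k + 1) : ℚ)) * X ^ k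

/-- The type-B Catalan polynomial `Cat(Bₙ; q) = Σₖ C(n, k)² qᵏ`. -/
noncomputable def catB (n : ℕ) : Polynomial ℚ :=
  ∑ k ∈ Finset.range (n + 1), C ((n.choose k : ℚ) ^ 2) * X ^ k

/-!
Put `B^r_m(q) = Σ_k C(m, k) C(m, k+r) q^k` (`catBGap r m`), so that `B^0_m = Cat(B_m)` and
`B^1_m = m Cat(A_{m-1})`. Pascal's rule gives
`B^r_{m+1} = (1+q) B^r_m + B^{r-1}_m + q B^{r+1}_m`, where `B^{-1}_m` is read as `q B^1_m`,
and the Narayana identity `(p+1)(C(p, k+1)² - C(p, k) C(p, k+2)) = C(p+1, k+1) C(p+1, k+2)`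
says `Cat(A_p) = B^0_p - q B^2_p`. With these, induction on `n` proves
`Σ_{i=1}^n Cat(A_{i-1}) B^r_{n-i} = B^{r+1}_n` simultaneously for all `r`;
the case `r = 0` is the theorem.
-/

open Finset

section Binomial

variable {R : Type*} [CommRing R]

theorem cast_choose_mul_succ_eq (n k : ℕ) :
    (n.choose k : R) * (n + 1) = (n + 1).choose k * (n + 1 - k) := by
  rcases le_or_gt k (n + 1) with hk | hk
  · rw [← Nat.cast_add_one, ← Nat.cast_sub hk, ← Nat.cast_mul, ← Nat.cast_mul,
      Nat.choose_mul_succ_eq]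
  · simp [Nat.choose_eq_zero_of_lt hk, Nat.choose_eq_zero_of_lt (Nat.lt_of_succ_lt hk)]

theorem add_one_mul_choose_sq_sub_choose_mul_choose [IsDomain R] [CharZero R] (p k : ℕ) :
    ((p : R) + 1) * ((p.choose (k + 1) : R) ^ 2 - p.choose k * p.choose (k + 2)) =
      (p + 1).choose (k + 1) * (p + 1).choose (k + 2) := by
  have h₁ : ((p : R) + 1) * p.choose k = (p + 1).choose (k + 1) * (k + 1) := by
    exact_mod_cast Nat.add_one_mul_choose_eq p k
  have h₂ : ((p : R) + 1) * p.choose (k + 1) = (p + 1).choose (k + 2) * (k + 2) := by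
    exact_mod_cast Nat.add_one_mul_choose_eq p (k + 1)
  have h₃ := cast_choose_mul_succ_eq (R := R) p (k + 1)
  have h₄ := cast_choose_mul_succ_eq (R := R) p (k + 2)
  push_cast at h₃ h₄
  -- times `p + 1`, both sides are multiples of `C(p+1, k+1) * C(p+1, k+2)` by `h₁`–`h₄`
  refine mul_left_cancel₀ (Nat.cast_add_one_ne_zero p) ?_
  linear_combination ((p : R) + 1) * p.choose (k + 1) * h₂
    + ((k : R) + 2) * (p + 1).choose (k + 2) * h₃
    - ((k : R) + 1) * (p + 1).choose (k + 1) * h₄ - ((p : R) + 1) * p.choose (k + 2) * h₁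

end Binomial

theorem coeff_sum_range_C_mul_X_pow {R : Type*} [Semiring R] (N : ℕ) (c : ℕ → R) (j : ℕ) :
    (∑ k ∈ range N, C (c k) * X ^ k).coeff j = if j < N then c j else 0 := by
  simp only [finsetSum_coeff, coeff_C_mul_X_pow, Finset.sum_ite_eq, mem_range]

noncomputable def catBGap (r m : ℕ) : ℚ[X] :=
  ∑ k ∈ range (m + 1), C ((m.choose k : ℚ) * m.choose (k + r)) * X ^ k

theorem coeff_catBGap (r m j : ℕ) : (catBGap r m).coeff j = m.choose j * m.choose (j + r) := by
  rw [catBGap, coeff_sum_range_C_mul_X_pow]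
  split_ifs with h
  · rfl
  · simp [Nat.choose_eq_zero_of_lt (not_lt.mp h)]

theorem catB_eq_catBGap_zero (m : ℕ) : catB m = catBGap 0 m := by
  simp only [catB, catBGap, add_zero, sq]

theorem coeff_catA (n j : ℕ) :
    (catA n).coeff j = 1 / ((n : ℚ) + 1) * (n + 1).choose j * (n + 1).choose (j + 1) := by
  rw [catA, coeff_sum_range_C_mul_X_pow]
  split_ifs with h
  · rfl
  · simp [Nat.choose_eq_zero_of_lt (show n + 1 < j + 1 by omega)]

theorem catBGap_one {n : ℕ} (hn : 1 ≤ n) : catBGap 1 n = n * catA (n - 1) := by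
  obtain ⟨m, rfl⟩ := Nat.exists_eq_add_of_le' hn
  ext j
  rw [coeff_natCast_mul, coeff_catBGap, coeff_catA, Nat.add_sub_cancel]
  push_cast
  field_simp

theorem catBGap_zero_zero : catBGap 0 0 = 1 := by
  simp [catBGap]

theorem catBGap_succ_zero (r : ℕ) : catBGap (r + 1) 0 = 0 := by
  simp [catBGap]

theorem catBGap_zero_succ (m : ℕ) :
    catBGap 0 (m + 1) = (1 + X) * catBGap 0 m + 2 * (X * catBGap 1 m) := by
  ext (_ | k)
  · simp [coeff_catBGap]
  · simp only [coeff_add, add_mul, one_mul, coeff_X_mul, coeff_ofNat_mul, coeff_catBGap,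
      Nat.choose_succ_succ', add_zero]
    push_cast
    ring

theorem catBGap_succ_succ (r m : ℕ) :
    catBGap (r + 1) (m + 1) =
      (1 + X) * catBGap (r + 1) m + catBGap r m + X * catBGap (r + 2) m := by
  ext (_ | k)
  · simp only [coeff_add, add_mul, one_mul, mul_coeff_zero, coeff_X_zero, zero_mul, add_zero,
      coeff_catBGap, Nat.choose_zero_right, zero_add, Nat.choose_succ_succ', Nat.cast_add]
    ring
  · simp only [coeff_add, add_mul, one_mul, coeff_X_mul, coeff_catBGap]
    rw [show k + 1 + (r + 1) = k + r + 1 + 1 by ring, show k + (r + 1) = k + r + 1 by ring,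
      show k + 1 + r = k + r + 1 by ring, show k + (r + 2) = k + r + 1 + 1 by ring]
    simp only [Nat.choose_succ_succ', Nat.cast_add]
    ring

theorem catA_add_X_mul_catBGap_two (p : ℕ) : catA p + X * catBGap 2 p = catBGap 0 p := by
  ext (_ | k)
  · simp [coeff_catA, coeff_catBGap, Nat.cast_add_one_ne_zero]
  · have h := add_one_mul_choose_sq_sub_choose_mul_choose (R := ℚ) p k
    rw [coeff_add, coeff_X_mul, coeff_catA, coeff_catBGap, coeff_catBGap]
    field_simp
    linear_combination -h

theorem sum_Icc_mul_sub_succ {R : Type*} [Semiring R] (f g : ℕ → R) (p : ℕ) :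
    ∑ i ∈ Icc 1 (p + 1), f (i - 1) * g (p + 1 - i) =
      ∑ i ∈ Icc 1 p, f (i - 1) * g (p - i + 1) + f p * g 0 := by
  rw [sum_Icc_succ_top (by omega), Nat.add_sub_cancel, Nat.sub_self]
  congr 1
  refine sum_congr rfl fun i hi => ?_
  rw [Nat.sub_add_comm (mem_Icc.mp hi).2]

theorem sum_catA_mul_catBGap (p r : ℕ) :
    ∑ i ∈ Icc 1 p, catA (i - 1) * catBGap r (p - i) = catBGap (r + 1) p := by
  induction p generalizing r with
  | zero => simp [catBGap_succ_zero]
  | succ p ih =>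
    rw [sum_Icc_mul_sub_succ]
    rcases r with _ | r
    · simp only [catBGap_zero_succ, catBGap_zero_zero, mul_add, sum_add_distrib,
        mul_left_comm (catA _), ← mul_sum, ih]
      rw [catBGap_succ_succ 0 p, ← catA_add_X_mul_catBGap_two]
      ring
    · simp only [catBGap_succ_succ, catBGap_succ_zero, mul_add, sum_add_distrib,
        mul_left_comm (catA _), ← mul_sum, ih]
      ring

/-- The identity `Σᵢ₌₁ⁿ Cat(Aᵢ₋₁; q)·Cat(Bₙ₋ᵢ; q) = n·Cat(Aₙ₋₁; q)`. -/
theorem catA_catB_convolution (n : ℕ) (hn : 1 ≤ n) :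
    ∑ i ∈ Finset.Icc 1 n, catA (i - 1) * catB (n - i) = (n : Polynomial ℚ) * catA (n - 1) := by
  simp only [catB_eq_catBGap_zero, sum_catA_mul_catBGap, catBGap_one hn]
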